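/- arXiv:2401.14156 — 2 statements merged into one kernel-verified Lean document; each statement's English description precedes it below -/
import Mathlib

section
/- Let ω be a modulus of continuity with lim_{t→0⁺} t/ω(t)=0, let E ⊆ ℝⁿ be an arbitrary nonempty set, and let V be a Banach space. A function f ∈ C^{0,ω}(E,V) admits an extension F ∈ VC_small^{0,ω}(ℝⁿ,V) with F|_E = f if and only if f ∈ VC_small^{0,ω}(E,V). -/
open Filter Set Topology

noncomputable section

/-- `ℝⁿ` with the Euclidean norm. -/
abbrev Rn (n : ℕ) : Type := EuclideanSpace ℝ (Fin n)

/-- `ω : (0,∞) → (0,∞)` is a modulus of continuity with constant `Cω`: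
nondecreasing, positive, `ω(t) → 0` as `t → 0⁺`, and `s/ω(s) ≤ Cω · t/ω(t)` for `0 < s ≤ t`. -/
def IsModulus (ω : ℝ → ℝ) (Cω : ℝ) : Prop :=
  (∀ t : ℝ, 0 < t → 0 < ω t) ∧
  (∀ s t : ℝ, 0 < s → s ≤ t → ω s ≤ ω t) ∧
  Filter.Tendsto ω (nhdsWithin 0 (Set.Ioi 0)) (nhds 0) ∧
  (∀ s t : ℝ, 0 < s → s ≤ t → s / ω s ≤ Cω * (t / ω t))

/-- Plug the vector `v` into `j` of the slots of a `(k+j)`-linear map. -/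
def plugIn {n : ℕ} {V : Type*} [NormedAddCommGroup V] [NormedSpace ℝ V] (v : Rn n) :
    ∀ (j : ℕ) {k : ℕ},
      ContinuousMultilinearMap ℝ (fun _ : Fin (k + j) => Rn n) V →
      ContinuousMultilinearMap ℝ (fun _ : Fin k => Rn n) V
  | 0, _, T => T
  | j + 1, _, T => plugIn v j (T.curryLeft v)

/-- The set of Hölder ratios `‖g x − g y‖ / ω(‖x−y‖)` over distinct pairs in `E`. -/
def ratioSet {n : ℕ} {W : Type*} [NormedAddCommGroup W] (ω : ℝ → ℝ)
    (g : Rn n → W) (E : Set (Rn n)) : Set ℝ :=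
  {r | ∃ x ∈ E, ∃ y ∈ E, x ≠ y ∧ r = ‖g x - g y‖ / ω ‖x - y‖}

/-- `g ∈ C^{0,ω}(E,W)`. -/
def MemHolderOn {n : ℕ} {W : Type*} [NormedAddCommGroup W] (ω : ℝ → ℝ)
    (g : Rn n → W) (E : Set (Rn n)) : Prop :=
  BddAbove (ratioSet ω g E)

/-- The seminorm `‖g‖_{C^{0,ω}(E,W)}`. -/
def holderNormOn {n : ℕ} {W : Type*} [NormedAddCommGroup W] (ω : ℝ → ℝ)
    (g : Rn n → W) (E : Set (Rn n)) : ℝ :=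
  sSup (ratioSet ω g E)

/-- The Hölder ratio of `g` vanishes uniformly as `|x−y| → 0` (over pairs in `E`). -/
def VanishSmallOn {n : ℕ} {W : Type*} [NormedAddCommGroup W] (ω : ℝ → ℝ)
    (g : Rn n → W) (E : Set (Rn n)) : Prop :=
  ∀ ε : ℝ, 0 < ε → ∃ δ : ℝ, 0 < δ ∧ ∀ x ∈ E, ∀ y ∈ E, x ≠ y → ‖x - y‖ ≤ δ →
    ‖g x - g y‖ ≤ ε * ω ‖x - y‖

/-- The Hölder ratio of `g` vanishes uniformly as `|x−y| → ∞` (over pairs in `E`). -/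
def VanishLargeOn {n : ℕ} {W : Type*} [NormedAddCommGroup W] (ω : ℝ → ℝ)
    (g : Rn n → W) (E : Set (Rn n)) : Prop :=
  ∀ ε : ℝ, 0 < ε → ∃ K : ℝ, ∀ x ∈ E, ∀ y ∈ E, x ≠ y → K ≤ ‖x - y‖ →
    ‖g x - g y‖ ≤ ε * ω ‖x - y‖

/-- The Hölder ratio of `g` vanishes uniformly as `min(|x|,|y|) → ∞` (over pairs in `E`). -/
def VanishFarOn {n : ℕ} {W : Type*} [NormedAddCommGroup W] (ω : ℝ → ℝ)
    (g : Rn n → W) (E : Set (Rn n)) : Prop :=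
  ∀ ε : ℝ, 0 < ε → ∃ K : ℝ, ∀ x ∈ E, ∀ y ∈ E, x ≠ y → K ≤ min ‖x‖ ‖y‖ →
    ‖g x - g y‖ ≤ ε * ω ‖x - y‖

/-- `R(A,x,y)`: the Taylor-remainder quantity of an `m`-jet at distinct points `x, y`. -/
def jetR {n : ℕ} {V : Type*} [NormedAddCommGroup V] [NormedSpace ℝ V]
    (A : Rn n → FormalMultilinearSeries ℝ (Rn n) V) (m : ℕ) (x y : Rn n) : ℝ :=
  (Finset.range (m + 1)).sup' Finset.nonempty_range_add_one fun k =>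
    ‖A x k - ∑ j ∈ Finset.range (m - k + 1),
        (j.factorial : ℝ)⁻¹ • plugIn (x - y) j (A y (k + j))‖ / ‖x - y‖ ^ (m - k)

/-- The set of ratios `R(A,x,y)/ω(|x−y|)` over distinct pairs in `E`. -/
def jetRatioSet {n : ℕ} {V : Type*} [NormedAddCommGroup V] [NormedSpace ℝ V] (ω : ℝ → ℝ)
    (A : Rn n → FormalMultilinearSeries ℝ (Rn n) V) (m : ℕ) (E : Set (Rn n)) : Set ℝ :=
  {r | ∃ x ∈ E, ∃ y ∈ E, x ≠ y ∧ r = jetR A m x y / ω ‖x - y‖}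

/-- Each component `A_k`, `k ≤ m`, of the jet is a symmetric multilinear map on `E`. -/
def JetSymmOn {n : ℕ} {V : Type*} [NormedAddCommGroup V] [NormedSpace ℝ V]
    (A : Rn n → FormalMultilinearSeries ℝ (Rn n) V) (m : ℕ) (E : Set (Rn n)) : Prop :=
  ∀ x ∈ E, ∀ k ≤ m, ∀ (σ : Equiv.Perm (Fin k)) (v : Fin k → Rn n),
    A x k (fun i => v (σ i)) = A x k v

/-- `A ∈ J^{m,ω}(E,V)`: a symmetric `m`-jet on `E` with finite jet seminorm. -/
def MemJetOn {n : ℕ} {V : Type*} [NormedAddCommGroup V] [NormedSpace ℝ V] (ω : ℝ → ℝ)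
    (A : Rn n → FormalMultilinearSeries ℝ (Rn n) V) (m : ℕ) (E : Set (Rn n)) : Prop :=
  JetSymmOn A m E ∧ BddAbove (jetRatioSet ω A m E)

/-- The jet seminorm `‖A‖_{J^{m,ω}(E,V)}`. -/
def jetNormOn {n : ℕ} {V : Type*} [NormedAddCommGroup V] [NormedSpace ℝ V] (ω : ℝ → ℝ)
    (A : Rn n → FormalMultilinearSeries ℝ (Rn n) V) (m : ℕ) (E : Set (Rn n)) : ℝ :=
  sSup (jetRatioSet ω A m E)

/-- `R(A,x,y)/ω(|x−y|)` vanishes uniformly as `|x−y| → 0`. -/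
def JetVanishSmallOn {n : ℕ} {V : Type*} [NormedAddCommGroup V] [NormedSpace ℝ V] (ω : ℝ → ℝ)
    (A : Rn n → FormalMultilinearSeries ℝ (Rn n) V) (m : ℕ) (E : Set (Rn n)) : Prop :=
  ∀ ε : ℝ, 0 < ε → ∃ δ : ℝ, 0 < δ ∧ ∀ x ∈ E, ∀ y ∈ E, x ≠ y → ‖x - y‖ ≤ δ →
    jetR A m x y ≤ ε * ω ‖x - y‖

/-- `R(A,x,y)/ω(|x−y|)` vanishes uniformly as `|x−y| → ∞`. -/
def JetVanishLargeOn {n : ℕ} {V : Type*} [NormedAddCommGroup V] [NormedSpace ℝ V] (ω : ℝ → ℝ)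
    (A : Rn n → FormalMultilinearSeries ℝ (Rn n) V) (m : ℕ) (E : Set (Rn n)) : Prop :=
  ∀ ε : ℝ, 0 < ε → ∃ K : ℝ, ∀ x ∈ E, ∀ y ∈ E, x ≠ y → K ≤ ‖x - y‖ →
    jetR A m x y ≤ ε * ω ‖x - y‖

/-- `R(A,x,y)/ω(|x−y|)` vanishes uniformly as `min(|x|,|y|) → ∞`. -/
def JetVanishFarOn {n : ℕ} {V : Type*} [NormedAddCommGroup V] [NormedSpace ℝ V] (ω : ℝ → ℝ)
    (A : Rn n → FormalMultilinearSeries ℝ (Rn n) V) (m : ℕ) (E : Set (Rn n)) : Prop :=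
  ∀ ε : ℝ, 0 < ε → ∃ K : ℝ, ∀ x ∈ E, ∀ y ∈ E, x ≠ y → K ≤ min ‖x‖ ‖y‖ →
    jetR A m x y ≤ ε * ω ‖x - y‖

/-- `F` extends the `m`-jet `A` on `E`: `D^k F = A_k` on `E` for `k = 0,…,m`. -/
def ExtendsJetOn {n : ℕ} {V : Type*} [NormedAddCommGroup V] [NormedSpace ℝ V]
    (F : Rn n → V) (A : Rn n → FormalMultilinearSeries ℝ (Rn n) V) (m : ℕ)
    (E : Set (Rn n)) : Prop :=
  ∀ y ∈ E, ∀ k ≤ m, iteratedFDeriv ℝ k F y = A y k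

/-- `F ∈ C^{m,ω}(ℝⁿ,V)`. -/
def MemCmOmega {n : ℕ} {V : Type*} [NormedAddCommGroup V] [NormedSpace ℝ V] (ω : ℝ → ℝ)
    (F : Rn n → V) (m : ℕ) : Prop :=
  ContDiff ℝ m F ∧ MemHolderOn ω (iteratedFDeriv ℝ m F) Set.univ

section WhitneyAux
open Metric

/-- Uniform bound on cardinality of (r/20)-separated subsets of a ball of radius 2r. -/
lemma sep_bound (n : ℕ) : ∃ N : ℕ, ∀ (c : Rn n) (r : ℝ), 0 < r →
    ∀ T : Set (Rn n), T ⊆ closedBall c (2*r) →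
    (T.Pairwise fun a b => r/20 ≤ dist a b) →
    T.Finite ∧ ∀ F : Finset (Rn n), ↑F ⊆ T → F.card ≤ N := by
  obtain ⟨t, htfin, htcov⟩ :=
    (Metric.totallyBounded_iff.mp (isCompact_closedBall (0 : Rn n) 2).totallyBounded)
      (1/41) (by norm_num)
  refine ⟨htfin.toFinset.card, fun c r hr T hTball hTsep => ?_⟩
  have key : ∀ F : Finset (Rn n), ↑F ⊆ T → F.card ≤ htfin.toFinset.card := by
    intro F hF
    set e : Rn n → Rn n := fun a => r⁻¹ • (a - c) with he
    have hdist : ∀ a b : Rn n, dist (e a) (e b) = r⁻¹ * dist a b := by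
      intro a b
      simp only [he, dist_eq_norm, ← smul_sub, norm_smul, sub_sub_sub_cancel_right,
        Real.norm_eq_abs, abs_of_pos (inv_pos.mpr hr)]
    have hmem : ∀ a ∈ F, e a ∈ closedBall (0 : Rn n) 2 := by
      intro a ha
      have h1 : dist a c ≤ 2 * r := by simpa [Metric.mem_closedBall] using hTball (hF ha)
      have : dist (e a) (e c) ≤ r⁻¹ * (2*r) := by
        rw [hdist]; exact mul_le_mul_of_nonneg_left h1 (inv_pos.mpr hr).le
      have hec : e c = 0 := by simp [he]
      rw [hec] at this
      have h2 : r⁻¹ * (2*r) = 2 := by field_simp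
      rw [h2] at this
      simpa [Metric.mem_closedBall] using this
    have hchoice : ∀ a ∈ F, ∃ y ∈ t, e a ∈ ball y (1/41) := by
      intro a ha
      have := htcov (hmem a ha)
      simpa using this
    choose! g hg1 hg2 using hchoice
    refine Finset.card_le_card_of_injOn g (fun a ha => htfin.mem_toFinset.mpr (hg1 a ha)) ?_
    intro a ha b hb hab
    by_contra hne
    have hsep : r/20 ≤ dist a b := hTsep (hF ha) (hF hb) hne
    have h1 : dist (e a) (e b) < 2/41 := by
      calc dist (e a) (e b) ≤ dist (e a) (g a) + dist (g a) (e b) := dist_triangle _ _ _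
        _ < 1/41 + 1/41 := by
            refine add_lt_add (by simpa [Metric.mem_ball] using hg2 a ha) ?_
            have := hg2 b hb
            rw [← hab] at this
            rw [dist_comm]
            simpa [Metric.mem_ball] using this
        _ = 2/41 := by norm_num
    have h2 : (1:ℝ)/20 ≤ dist (e a) (e b) := by
      rw [hdist]
      have := mul_le_mul_of_nonneg_left hsep (inv_pos.mpr hr).le
      calc (1:ℝ)/20 = r⁻¹ * (r/20) := by field_simp
        _ ≤ r⁻¹ * dist a b := this
    linarith
  refine ⟨?_, key⟩
  by_contra hinf
  have hTinf : T.Infinite := hinf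
  obtain ⟨F, hF, hcard⟩ := hTinf.exists_subset_card_eq (htfin.toFinset.card + 1)
  have := key F hF
  omega

section Modulus
variable {ω : ℝ → ℝ} {Cω : ℝ}

lemma IsModulus.one_le (hω : IsModulus ω Cω) : 1 ≤ Cω := by
  have h := hω.2.2.2 1 1 one_pos le_rfl
  have h1 : 0 < (1:ℝ) / ω 1 := by
    have := hω.1 1 one_pos; positivity
  nlinarith

/-- s ω(t) ≤ Cω t ω(s) for 0 < s ≤ t. -/
lemma IsModulus.scale (hω : IsModulus ω Cω) {s t : ℝ} (hs : 0 < s) (hst : s ≤ t) :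
    s * ω t ≤ Cω * (t * ω s) := by
  have h := hω.2.2.2 s t hs hst
  have h1 : 0 < ω s := hω.1 s hs
  have h2 : 0 < ω t := hω.1 t (hs.trans_le hst)
  have h3 : s ≤ Cω * (t / ω t) * ω s := by
    rw [div_le_iff₀ h1] at h; linarith
  calc s * ω t ≤ (Cω * (t / ω t) * ω s) * ω t := mul_le_mul_of_nonneg_right h3 h2.le
    _ = Cω * (t * ω s) := by field_simp

/-- ω(K t) ≤ K Cω ω(t) for K ≥ 1, t > 0. -/
lemma IsModulus.dilate (hω : IsModulus ω Cω) {K t : ℝ} (hK : 1 ≤ K) (ht : 0 < t) :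
    ω (K * t) ≤ K * Cω * ω t := by
  have h := hω.scale ht (by nlinarith : t ≤ K * t)
  have h4 : t * ω (K * t) ≤ t * (K * Cω * ω t) := by linarith [h]
  exact le_of_mul_le_mul_left h4 ht

/-- Monotone comparison: for 0 < a ≤ K * t with K ≥ 1, t > 0 : ω a ≤ K Cω ω t. -/
lemma IsModulus.mono_dilate (hω : IsModulus ω Cω) {K a t : ℝ} (hK : 1 ≤ K) (ht : 0 < t)
    (ha : 0 < a) (haK : a ≤ K * t) : ω a ≤ K * Cω * ω t :=
  (hω.2.1 a (K*t) ha haK).trans (hω.dilate hK ht)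

end Modulus

/-- Maximal separated subset of U, with covering property. -/
lemma exists_max_sep {X : Type*} [MetricSpace X] (U : Set X) (d : X → ℝ) :
    ∃ D ⊆ U, (D.Pairwise fun z z' => d z ≤ 10 * dist z z' ∧ d z' ≤ 10 * dist z z') ∧
      ∀ x ∈ U, x ∉ D → ∃ z ∈ D, z ≠ x ∧
        (10 * dist x z < d x ∨ 10 * dist x z < d z) := by
  set P : X → X → Prop := fun z z' => d z ≤ 10 * dist z z' ∧ d z' ≤ 10 * dist z z' with hP
  obtain ⟨D, hD⟩ := zorn_subset {S : Set X | S ⊆ U ∧ S.Pairwise P} (by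
    intro c hc hchain
    refine ⟨⋃₀ c, ⟨?_, ?_⟩, fun s hs => subset_sUnion_of_mem hs⟩
    · exact sUnion_subset fun s hs => (hc hs).1
    · intro a ha b hb hab
      obtain ⟨s, hs, has⟩ := ha
      obtain ⟨s', hs', hbs⟩ := hb
      rcases hchain.total hs hs' with h | h
      · exact (hc hs').2 (h has) hbs hab
      · exact (hc hs).2 has (h hbs) hab)
  refine ⟨D, hD.prop.1, hD.prop.2, ?_⟩
  intro x hxU hxD
  by_contra hcon
  push_neg at hcon
  have hins : insert x D ∈ {S : Set X | S ⊆ U ∧ S.Pairwise P} := by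
    constructor
    · exact insert_subset hxU hD.prop.1
    · intro a ha b hb hab
      rcases ha with rfl | ha
      · rcases hb with rfl | hb
        · exact absurd rfl hab
        · exact hcon b hb (Ne.symm hab)
      · rcases hb with rfl | hb
        · obtain ⟨h1, h2⟩ := hcon a ha hab
          rw [dist_comm] at h1 h2
          exact ⟨h2, h1⟩
        · exact hD.prop.2 ha hb hab
  have : insert x D ⊆ D := hD.le_of_ge hins (subset_insert x D)
  exact hxD (this (mem_insert x D))

lemma one_div_succ_mono {N k : ℕ} (h : N ≤ k) : (1:ℝ)/(k+1) ≤ 1/(N+1) := by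
  apply one_div_le_one_div_of_le
  · positivity
  · exact add_le_add_left (Nat.cast_le.mpr h) 1

lemma mul_div_succ_lt {M ε : ℝ} (hM : 0 ≤ M) (hε : 0 < ε) : M * (ε/(M+1)) < ε := by
  have h : M/(M+1) < 1 := (div_lt_one (by linarith)).mpr (by linarith)
  calc M * (ε/(M+1)) = (M/(M+1)) * ε := by ring
    _ < 1 * ε := by nlinarith
    _ = ε := one_mul ε

/-- ω is small on small positive arguments. -/
lemma omega_small {ω : ℝ → ℝ} {Cω : ℝ} (hω : IsModulus ω Cω) {ε : ℝ} (hε : 0 < ε) :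
    ∃ δ > 0, ∀ t : ℝ, 0 < t → t ≤ δ → ω t < ε := by
  have h := hω.2.2.1
  rw [Metric.tendsto_nhdsWithin_nhds] at h
  obtain ⟨δ, hδ, hh⟩ := h ε hε
  refine ⟨δ/2, by linarith, fun t ht htδ => ?_⟩
  have := hh (x := t) ht (by simp only [Real.dist_eq, sub_zero, abs_of_pos ht]; linarith)
  simp only [Real.dist_eq, sub_zero, abs_of_pos (hω.1 t ht)] at this
  exact this

lemma extend_to_closure {n : ℕ} {V : Type*} [NormedAddCommGroup V] [NormedSpace ℝ V]
    [CompleteSpace V] {ω : ℝ → ℝ} {Cω : ℝ} (hCω : 0 < Cω) (hω : IsModulus ω Cω)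
    (E : Set (Rn n)) (hE : E.Nonempty) (f : Rn n → V) (M : ℝ) (hM0 : 0 ≤ M)
    (hb : ∀ x ∈ E, ∀ y ∈ E, x ≠ y → ‖f x - f y‖ ≤ M * ω (dist x y)) :
    ∃ g : Rn n → V, (∀ x ∈ E, g x = f x) ∧
      ∀ ε' δ' : ℝ, 0 ≤ ε' → 0 < δ' →
        (∀ a ∈ E, ∀ b ∈ E, a ≠ b → dist a b ≤ δ' → ‖f a - f b‖ ≤ ε' * ω (dist a b)) →
        ∀ x ∈ closure E, ∀ y ∈ closure E, x ≠ y → dist x y ≤ δ'/2 →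
          ‖g x - g y‖ ≤ 2 * Cω * ε' * ω (dist x y) := by
  classical
  -- choose approximating sequences
  have hseq : ∀ x : Rn n, x ∈ closure E → ∀ k : ℕ, ∃ a ∈ E, dist a x < 1/(k+1) := by
    intro x hx k
    have := Metric.mem_closure_iff.mp hx (1/(k+1)) (by positivity)
    obtain ⟨a, haE, ha⟩ := this
    exact ⟨a, haE, by rwa [dist_comm]⟩
  choose! u huE hud using hseq
  -- Cauchy
  have hcauchy : ∀ x : Rn n, x ∈ closure E → CauchySeq (fun k => f (u x k)) := by
    intro x hx
    rw [Metric.cauchySeq_iff]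
    intro ε hε
    obtain ⟨δ, hδ, hsm⟩ := omega_small hω (show (0:ℝ) < ε/(M+1) by positivity)
    obtain ⟨N, hN⟩ := exists_nat_one_div_lt (show (0:ℝ) < δ/2 by linarith)
    refine ⟨N, fun j hj k hk => ?_⟩
    have hdjk : dist (u x j) (u x k) < δ := by
      calc dist (u x j) (u x k) ≤ dist (u x j) x + dist (u x k) x := dist_triangle_right _ _ _
        _ < 1/(j+1) + 1/(k+1) := add_lt_add (hud x hx j) (hud x hx k)
        _ ≤ 1/(N+1) + 1/(N+1) := add_le_add (one_div_succ_mono hj) (one_div_succ_mono hk)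
        _ < δ/2 + δ/2 := by linarith

        _ = δ := by ring
    rcases eq_or_ne (u x j) (u x k) with h | h
    · simpa [h] using hε
    · rw [dist_eq_norm]
      rcases eq_or_lt_of_le (dist_nonneg (x := u x j) (y := u x k)) with h0 | h0
      · exact absurd (dist_eq_zero.mp h0.symm) h
      calc ‖f (u x j) - f (u x k)‖ ≤ M * ω (dist (u x j) (u x k)) :=
            hb _ (huE x hx j) _ (huE x hx k) h
        _ ≤ M * (ε/(M+1)) := by
            have := hsm _ h0 hdjk.le
            nlinarith
        _ < ε := mul_div_succ_lt hM0 hε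
  have hlim : ∀ x : Rn n, x ∈ closure E → ∃ v : V, Tendsto (fun k => f (u x k)) atTop (𝓝 v) := by
    intro x hx
    exact cauchySeq_tendsto_of_complete (hcauchy x hx)
  choose! v hv using hlim
  set g : Rn n → V := fun x => if hx : x ∈ closure E then v x else f x with hg
  have hgcl : ∀ x ∈ closure E, Tendsto (fun k => f (u x k)) atTop (𝓝 (g x)) := by
    intro x hx
    rw [hg]; simp only [dif_pos hx]; exact hv x hx
  have hgE : ∀ x ∈ E, g x = f x := by
    intro x hxE
    have hx : x ∈ closure E := subset_closure hxE
    have htend : Tendsto (fun k => f (u x k)) atTop (𝓝 (f x)) := by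
      rw [Metric.tendsto_atTop]
      intro ε hε
      obtain ⟨δ, hδ, hsm⟩ := omega_small hω (show (0:ℝ) < ε/(M+1) by positivity)
      obtain ⟨N, hN⟩ := exists_nat_one_div_lt hδ
      refine ⟨N, fun k hk => ?_⟩
      have hdk : dist (u x k) x < δ := by
        calc dist (u x k) x < 1/(k+1) := hud x hx k
          _ ≤ 1/(N+1) := one_div_succ_mono hk
          _ < δ := hN
      rcases eq_or_ne (u x k) x with h | h
      · simpa [h] using hε
      · rw [dist_eq_norm]
        have h0 : 0 < dist (u x k) x := dist_pos.mpr h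
        calc ‖f (u x k) - f x‖ ≤ M * ω (dist (u x k) x) := hb _ (huE x hx k) _ hxE h
          _ ≤ M * (ε/(M+1)) := by nlinarith [hsm _ h0 hdk.le]
          _ < ε := mul_div_succ_lt hM0 hε
    exact tendsto_nhds_unique (hgcl x hx) htend
  refine ⟨g, hgE, ?_⟩
  intro ε' δ' hε' hδ' hyp x hx y hy hxy hclose
  set t := dist x y with ht
  have ht0 : 0 < t := dist_pos.mpr hxy
  have htend : Tendsto (fun k => ‖f (u x k) - f (u y k)‖) atTop (𝓝 ‖g x - g y‖) :=
    ((hgcl x hx).sub (hgcl y hy)).norm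
  refine le_of_tendsto htend ?_
  obtain ⟨N, hN⟩ := exists_nat_one_div_lt (show (0:ℝ) < t/2 by linarith)
  rw [eventually_atTop]
  refine ⟨N, fun k hk => ?_⟩
  have hd1 : dist (u x k) x < t/2 := by
    calc dist (u x k) x < 1/(k+1) := hud x hx k
      _ ≤ 1/(N+1) := one_div_succ_mono hk
      _ < t/2 := hN
  have hd2 : dist (u y k) y < t/2 := by
    calc dist (u y k) y < 1/(k+1) := hud y hy k
      _ ≤ 1/(N+1) := one_div_succ_mono hk
      _ < t/2 := hN
  have hdd : dist (u x k) (u y k) ≤ 2 * t := by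
    calc dist (u x k) (u y k) ≤ dist (u x k) x + dist x y + dist y (u y k) :=
          dist_triangle4 _ _ _ _
      _ ≤ t/2 + t + t/2 := by rw [dist_comm y]; linarith
      _ = 2 * t := by ring
  rcases eq_or_ne (u x k) (u y k) with h | h
  · simp only [h, sub_self, norm_zero]
    have := hω.1 t ht0
    positivity
  · have h0 : 0 < dist (u x k) (u y k) := dist_pos.mpr h
    calc ‖f (u x k) - f (u y k)‖ ≤ ε' * ω (dist (u x k) (u y k)) := by
          refine hyp _ (huE x hx k) _ (huE y hy k) h (by linarith)
      _ ≤ ε' * (2 * Cω * ω t) := by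
          have := hω.mono_dilate (by norm_num : (1:ℝ) ≤ 2) ht0 h0 hdd
          nlinarith
      _ = 2 * Cω * ε' * ω t := by ring

set_option maxHeartbeats 8000000 in
lemma whitney_closed {n : ℕ} {V : Type*} [NormedAddCommGroup V] [NormedSpace ℝ V]
    {ω : ℝ → ℝ} {Cω : ℝ} (hCω : 0 < Cω) (hω : IsModulus ω Cω)
    (hreg : Filter.Tendsto (fun t => t / ω t) (nhdsWithin 0 (Set.Ioi 0)) (nhds 0))
    (E : Set (Rn n)) (hEc : IsClosed E) (hE : E.Nonempty) (f : Rn n → V) (M : ℝ) (hM0 : 0 ≤ M)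
    (hb : ∀ x ∈ E, ∀ y ∈ E, x ≠ y → ‖f x - f y‖ ≤ M * ω (dist x y))
    (hs : ∀ ε : ℝ, 0 < ε → ∃ δ > 0, ∀ x ∈ E, ∀ y ∈ E, x ≠ y → dist x y ≤ δ →
      ‖f x - f y‖ ≤ ε * ω (dist x y)) :
    ∃ F : Rn n → V, (∀ x ∈ E, F x = f x) ∧
      (∃ A : ℝ, ∀ x y : Rn n, x ≠ y → ‖F x - F y‖ ≤ A * ω (dist x y)) ∧
      (∀ ε : ℝ, 0 < ε → ∃ δ > 0, ∀ x y : Rn n, x ≠ y → dist x y ≤ δ →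
        ‖F x - F y‖ ≤ ε * ω (dist x y)) := by
  classical
  have hCω1 : 1 ≤ Cω := hω.one_le
  obtain ⟨N, hN⟩ := sep_bound n
  set d : Rn n → ℝ := fun x => infDist x E with hd
  set U : Set (Rn n) := Eᶜ with hU
  have hd0 : ∀ x, 0 ≤ d x := fun x => infDist_nonneg
  have hdE : ∀ x ∈ E, d x = 0 := fun x hx => infDist_zero_of_mem hx
  have hdpos : ∀ x ∈ U, 0 < d x := by
    intro x hx
    rcases (hd0 x).eq_or_lt with h | h
    · exact absurd ((hEc.mem_iff_infDist_zero hE).mpr h.symm) hx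
    · exact h
  have hdlip : ∀ x y : Rn n, d x ≤ d y + dist x y := fun x y => infDist_le_infDist_add_dist
  have hdle : ∀ (x : Rn n), ∀ q ∈ E, d x ≤ dist x q := fun x q hq => infDist_le_dist_of_mem hq
  obtain ⟨D, hDU, hDsep, hDmax⟩ := exists_max_sep U d
  -- covering
  have hcov : ∀ x ∈ U, ∃ z ∈ D, dist x z ≤ d z / 9 := by
    intro x hx
    by_cases hxD : x ∈ D
    · exact ⟨x, hxD, by simp only [dist_self]; exact div_nonneg (hd0 x) (by norm_num)⟩
    · obtain ⟨z, hzD, hzx, hlt⟩ := hDmax x hx hxD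
      refine ⟨z, hzD, ?_⟩
      rcases hlt with h | h
      · have h1 : d x ≤ d z + dist x z := hdlip x z
        linarith
      · linarith [hd0 z]
  -- nearest points
  have hp' : ∀ z : Rn n, ∃ q, q ∈ E ∧ (z ∈ U → dist z q < 2 * d z) := by
    intro z
    by_cases hz : z ∈ E
    · exact ⟨z, hz, fun hzU => absurd hz hzU⟩
    · have hzU : z ∈ U := hz
      have : infDist z E < 2 * d z := by have := hdpos z hzU; simp only [hd]; linarith
      obtain ⟨q, hqE, hq⟩ := (infDist_lt_iff hE).mp this
      exact ⟨q, hqE, fun _ => hq⟩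
  choose p hpE hpd using hp'
  -- bump functions
  set φ : Rn n → Rn n → ℝ := fun z x => max 0 (min 1 (2 - 5 * dist x z / d z)) with hφ
  have hφ0 : ∀ z x, 0 ≤ φ z x := fun z x => le_max_left 0 _
  have hφ1 : ∀ z x, φ z x ≤ 1 := fun z x => max_le zero_le_one (min_le_left _ _)
  have hφone : ∀ z x, 0 < d z → dist x z ≤ d z / 5 → φ z x = 1 := by
    intro z x hz hdist
    have h1 : (1:ℝ) ≤ 2 - 5 * dist x z / d z := by
      have h2 : 5 * dist x z / d z ≤ 1 := by rw [div_le_one hz]; linarith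
      linarith
    rw [hφ]
    simp only [min_eq_left h1, max_eq_right zero_le_one]
  have hφzero : ∀ z x, 0 < d z → 2/5 * d z ≤ dist x z → φ z x = 0 := by
    intro z x hz hdist
    have h1 : 2 - 5 * dist x z / d z ≤ 0 := by
      have : 2 ≤ 5 * dist x z / d z := by rw [le_div_iff₀ hz]; linarith
      linarith
    rw [hφ]
    simp only
    rw [max_eq_left ((min_le_right _ _).trans h1)]
  have hφlip : ∀ z, 0 < d z → ∀ x y, |φ z x - φ z y| ≤ 5 / d z * dist x y := by
    intro z hz x y
    have h1 : |φ z x - φ z y| ≤ |(2 - 5 * dist x z / d z) - (2 - 5 * dist y z / d z)| := by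
      rw [hφ]
      simp only
      calc |max 0 (min 1 (2 - 5 * dist x z / d z)) - max 0 (min 1 (2 - 5 * dist y z / d z))|
          = |min 1 (2 - 5 * dist x z / d z) ⊔ 0 - min 1 (2 - 5 * dist y z / d z) ⊔ 0| := by
            rw [max_comm (0:ℝ), max_comm (0:ℝ)]
        _ ≤ |min 1 (2 - 5 * dist x z / d z) - min 1 (2 - 5 * dist y z / d z)| :=
            abs_max_sub_max_le_abs _ _ _
        _ ≤ max |(1:ℝ) - 1| |(2 - 5 * dist x z / d z) - (2 - 5 * dist y z / d z)| :=
            abs_min_sub_min_le_max _ _ _ _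
        _ ≤ |(2 - 5 * dist x z / d z) - (2 - 5 * dist y z / d z)| := by
            simp
    refine h1.trans ?_
    have h2 : (2 - 5 * dist x z / d z) - (2 - 5 * dist y z / d z)
        = 5 / d z * (dist y z - dist x z) := by field_simp; ring
    rw [h2, abs_mul, abs_of_pos (by positivity : (0:ℝ) < 5 / d z)]
    have h3 : |dist y z - dist x z| ≤ dist x y := by
      rw [abs_sub_comm]
      exact abs_dist_sub_le x y z
    nlinarith [h3, (by positivity : (0:ℝ) < 5 / d z)]
  -- support sets
  set S : Rn n → Set (Rn n) := fun x => {z ∈ D | dist x z < 2/5 * d z} with hS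
  have hSD : ∀ x, S x ⊆ D := fun x z hz => hz.1
  have hSdz : ∀ x z, z ∈ S x → 0 < d z := fun x z hz => hdpos z (hDU (hz.1))
  have hSub : ∀ x z, z ∈ S x → d z ≤ 5/3 * d x ∧ 5/7 * d x ≤ d z ∧ dist x z ≤ 2/3 * d x := by
    intro x z hz
    obtain ⟨hzD, hzd⟩ := hz
    have h1 : d z ≤ d x + dist z x := hdlip z x
    have h2 : d x ≤ d z + dist x z := hdlip x z
    rw [dist_comm] at h1
    have hub : d z ≤ 5/3 * d x := by linarith
    refine ⟨hub, by linarith, by linarith⟩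
  have hSE : ∀ x ∈ E, S x = ∅ := by
    intro x hx
    ext z
    simp only [hS, mem_setOf_eq, mem_empty_iff_false, iff_false, not_and]
    intro hzD
    have h1 : d z ≤ d x + dist z x := hdlip z x
    rw [hdE x hx, zero_add, dist_comm] at h1
    have h2 : 0 < d z := hdpos z (hDU hzD)
    intro hlt
    linarith
  have hSfin : ∀ x, (S x).Finite := by
    intro x
    by_cases hx : x ∈ E
    · rw [hSE x hx]; exact finite_empty
    · have hx' : x ∈ U := hx
      have hdx := hdpos x hx'
      refine (hN x (d x) hdx (S x) ?_ ?_).1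
      · intro z hz
        rw [mem_closedBall]
        have := (hSub x z hz).2.2
        rw [dist_comm] at this
        linarith [hd0 x]
      · intro z hz z' hz' hne
        have hsep := hDsep (hSD x hz) (hSD x hz') hne
        have h1 := (hSub x z hz).2.1
        linarith [hsep.1]
  set Tf : Rn n → Finset (Rn n) := fun x => (hSfin x).toFinset with hTf
  have hTmem : ∀ x z, z ∈ Tf x ↔ z ∈ S x := fun x z => (hSfin x).mem_toFinset
  set Φ : Rn n → ℝ := fun x => ∑ z ∈ Tf x, φ z x with hΦ
  have hΦ0 : ∀ x, 0 ≤ Φ x := fun x => Finset.sum_nonneg fun z _ => hφ0 z x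
  have hφnotS : ∀ x z, z ∈ D → z ∉ S x → φ z x = 0 := by
    intro x z hzD hzS
    have hdz := hdpos z (hDU hzD)
    apply hφzero z x hdz
    by_contra hcon
    push_neg at hcon
    exact hzS ⟨hzD, by linarith⟩
  have hΦext : ∀ x (G : Finset (Rn n)), Tf x ⊆ G → ↑G ⊆ D → Φ x = ∑ z ∈ G, φ z x := by
    intro x G hsub hGD
    rw [hΦ]
    exact Finset.sum_subset hsub fun z hzG hzT =>
      hφnotS x z (hGD hzG) (fun h => hzT ((hTmem x z).mpr h))
  have hΦ1 : ∀ x ∈ U, 1 ≤ Φ x := by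
    intro x hx
    obtain ⟨z, hzD, hzc⟩ := hcov x hx
    have hdz := hdpos z (hDU hzD)
    have hzS : z ∈ S x := ⟨hzD, by linarith⟩
    have hone : φ z x = 1 := hφone z x hdz (by linarith)
    calc (1:ℝ) = φ z x := hone.symm
      _ ≤ Φ x := Finset.single_le_sum (fun w _ => hφ0 w x) ((hTmem x z).mpr hzS)
  set F : Rn n → V := fun x => if x ∈ E then f x else (Φ x)⁻¹ • ∑ z ∈ Tf x, φ z x • f (p z)
    with hF
  have hFE : ∀ x ∈ E, F x = f x := fun x hx => by rw [hF]; simp only [if_pos hx]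
  -- mixed estimate: F at a point of U vs f at a point of E
  have hmix : ∀ x ∈ U, ∀ q ∈ E, ∀ ε' : ℝ, 0 ≤ ε' →
      (∀ a ∈ E, ∀ b ∈ E, a ≠ b → dist a b ≤ 5 * dist x q → ‖f a - f b‖ ≤ ε' * ω (dist a b)) →
      ‖F x - f q‖ ≤ 5 * Cω * ε' * ω (dist x q) := by
    intro x hx q hq ε' hε' hyp
    have hdx := hdpos x hx
    have hxq : 0 < dist x q := lt_of_lt_of_le hdx (hdle x q hq)
    have hωq := hω.1 _ hxq
    have hΦx := hΦ1 x hx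
    have hΦpos : 0 < Φ x := lt_of_lt_of_le one_pos hΦx
    have hxe : x ∉ E := hx
    have hFx : F x = (Φ x)⁻¹ • ∑ z ∈ Tf x, φ z x • f (p z) := by
      rw [hF]; simp only [if_neg hxe]
    have hBnd : ∀ z ∈ Tf x, ‖f (p z) - f q‖ ≤ ε' * (5 * Cω * ω (dist x q)) := by
      intro z hzT
      have hzS := (hTmem x z).mp hzT
      have hdz := hSdz x z hzS
      have hzU : z ∈ U := hDU (hSD x hzS)
      obtain ⟨hub, hlb, hxz⟩ := hSub x z hzS
      have hdxq : d x ≤ dist x q := hdle x q hq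
      have hpq : dist (p z) q ≤ 5 * dist x q := by
        have h1 := hpd z hzU
        have h2 : dist (p z) z = dist z (p z) := dist_comm _ _
        have h3 : dist z x = dist x z := dist_comm _ _
        calc dist (p z) q ≤ dist (p z) z + dist z x + dist x q := dist_triangle4 _ _ _ _
          _ ≤ 2 * d z + 2/3 * d x + dist x q := by rw [h2, h3]; linarith
          _ ≤ 4 * d x + dist x q := by linarith
          _ ≤ 5 * dist x q := by linarith
      rcases eq_or_ne (p z) q with he | hne
      · rw [he, sub_self, norm_zero]; positivity
      · have h0 : 0 < dist (p z) q := dist_pos.mpr hne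
        calc ‖f (p z) - f q‖ ≤ ε' * ω (dist (p z) q) := hyp _ (hpE z) _ hq hne hpq
          _ ≤ ε' * (5 * Cω * ω (dist x q)) := by
              have := hω.mono_dilate (by norm_num : (1:ℝ) ≤ 5) hxq h0 hpq
              nlinarith
    have hsum : F x - f q = (Φ x)⁻¹ • ∑ z ∈ Tf x, φ z x • (f (p z) - f q) := by
      rw [hFx]
      have h2 : ∑ z ∈ Tf x, φ z x • (f (p z) - f q)
          = (∑ z ∈ Tf x, φ z x • f (p z)) - Φ x • f q := by
        simp only [smul_sub, Finset.sum_sub_distrib]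
        congr 1
        rw [hΦ]
        simp only
        rw [Finset.sum_smul]
      rw [h2, smul_sub, smul_smul, inv_mul_cancel₀ hΦpos.ne', one_smul]
    rw [hsum, norm_smul, Real.norm_eq_abs, abs_of_pos (inv_pos.mpr hΦpos)]
    have h3 : ‖∑ z ∈ Tf x, φ z x • (f (p z) - f q)‖
        ≤ Φ x * (ε' * (5 * Cω * ω (dist x q))) := by
      calc ‖∑ z ∈ Tf x, φ z x • (f (p z) - f q)‖
          ≤ ∑ z ∈ Tf x, ‖φ z x • (f (p z) - f q)‖ := norm_sum_le _ _
        _ = ∑ z ∈ Tf x, φ z x * ‖f (p z) - f q‖ := by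
            refine Finset.sum_congr rfl fun z hz => ?_
            rw [norm_smul, Real.norm_eq_abs, abs_of_nonneg (hφ0 z x)]
        _ ≤ ∑ z ∈ Tf x, φ z x * (ε' * (5 * Cω * ω (dist x q))) :=
            Finset.sum_le_sum fun z hz => mul_le_mul_of_nonneg_left (hBnd z hz) (hφ0 z x)
        _ = Φ x * (ε' * (5 * Cω * ω (dist x q))) := by
            rw [← Finset.sum_mul, hΦ]
    calc (Φ x)⁻¹ * ‖∑ z ∈ Tf x, φ z x • (f (p z) - f q)‖
        ≤ (Φ x)⁻¹ * (Φ x * (ε' * (5 * Cω * ω (dist x q)))) :=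
          mul_le_mul_of_nonneg_left h3 (inv_nonneg.mpr hΦpos.le)
      _ = ε' * (5 * Cω * ω (dist x q)) := by field_simp
      _ = 5 * Cω * ε' * ω (dist x q) := by ring
  set CN : ℝ := 10 * (N:ℝ) * (1 + (N:ℝ)) with hCN
  have hCN0 : 0 ≤ CN := by positivity
  -- near-field estimate (both points deep in U, close together)
  have hc2 : ∀ x y : Rn n, x ∈ U → y ∈ U → x ≠ y → d y ≤ d x → 100 * dist x y < d x →
      ∀ β : ℝ, 0 ≤ β →
      (∀ a ∈ E, ∀ b ∈ E, a ≠ b → dist a b ≤ 7 * d x → ‖f a - f b‖ ≤ β * ω (dist a b)) →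
      ‖F x - F y‖ ≤ 7 * CN * Cω * β * (dist x y / d x * ω (d x)) := by
    intro x y hx hy hxy hdyx h100 β hβ hyp
    set t := dist x y with htdef
    have ht0 : 0 < t := dist_pos.mpr hxy
    have hdx := hdpos x hx
    have hdy := hdpos y hy
    have hωdx := hω.1 _ hdx
    have hdxy : d x ≤ d y + t := hdlip x y
    have hdy99 : 99/100 * d x ≤ d y := by linarith
    set T : Finset (Rn n) := Tf x ∪ Tf y with hT
    have hTD : ↑T ⊆ D := by
      intro z hz
      rw [hT] at hz
      simp only [Finset.coe_union, mem_union, Finset.mem_coe] at hz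
      rcases hz with hz | hz
      · exact hSD x ((hTmem x z).mp hz)
      · exact hSD y ((hTmem y z).mp hz)
    have hTz : ∀ z ∈ T, 99/140 * d x ≤ d z ∧ d z ≤ 5/3 * d x ∧ dist z x ≤ d x := by
      intro z hz
      rw [hT, Finset.mem_union] at hz
      rcases hz with hz | hz
      · obtain ⟨hub, hlb, hxz⟩ := hSub x z ((hTmem x z).mp hz)
        rw [dist_comm]
        exact ⟨by linarith, hub, by linarith⟩
      · obtain ⟨hub, hlb, hyz⟩ := hSub y z ((hTmem y z).mp hz)
        have h1 : dist z x ≤ dist z y + t := by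
          rw [htdef, dist_comm x y]
          exact dist_triangle z y x
        rw [dist_comm z y] at h1
        refine ⟨by linarith, by linarith, by linarith⟩
    have hTdz : ∀ z ∈ T, 0 < d z := fun z hz => hdpos z (hDU (hTD hz))
    -- cardinality bound
    have hcard : (T.card : ℝ) ≤ (N : ℝ) := by
      have := (hN x (d x) hdx ↑T (fun z hz => by
          rw [mem_closedBall]
          have := (hTz z hz).2.2
          linarith) (by
          intro z hz z' hz' hne
          have hsep := hDsep (hTD hz) (hTD hz') hne
          have h1 := (hTz z hz).1
          linarith [hsep.1])).2 T subset_rfl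
      exact_mod_cast this
    -- per-z Lipschitz bound on φ
    have hφl : ∀ z ∈ T, |φ z x - φ z y| ≤ 10 / d x * t := by
      intro z hz
      have hdz := hTdz z hz
      have h1 := hφlip z hdz x y
      have h2 : 5 / d z ≤ 10 / d x := by
        rw [div_le_div_iff₀ hdz hdx]
        have := (hTz z hz).1
        linarith
      calc |φ z x - φ z y| ≤ 5 / d z * t := h1
        _ ≤ 10 / d x * t := mul_le_mul_of_nonneg_right h2 ht0.le
    -- Φ as sums over T
    have hΦxT : Φ x = ∑ z ∈ T, φ z x := hΦext x T Finset.subset_union_left hTD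
    have hΦyT : Φ y = ∑ z ∈ T, φ z y := hΦext y T Finset.subset_union_right hTD
    have hΦdiff : |Φ x - Φ y| ≤ 10 * (N:ℝ) / d x * t := by
      rw [hΦxT, hΦyT, ← Finset.sum_sub_distrib]
      calc |∑ z ∈ T, (φ z x - φ z y)| ≤ ∑ z ∈ T, |φ z x - φ z y| :=
            Finset.abs_sum_le_sum_abs _ _
        _ ≤ ∑ _z ∈ T, 10 / d x * t := Finset.sum_le_sum hφl
        _ = (T.card : ℝ) * (10 / d x * t) := by rw [Finset.sum_const, nsmul_eq_mul]
        _ ≤ (N:ℝ) * (10 / d x * t) := by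
            have h0 : 0 ≤ 10 / d x * t := by positivity
            nlinarith
        _ = 10 * (N:ℝ) / d x * t := by ring
    have hΦx1 := hΦ1 x hx
    have hΦy1 := hΦ1 y hy
    have hΦxpos : 0 < Φ x := lt_of_lt_of_le one_pos hΦx1
    have hΦypos : 0 < Φ y := lt_of_lt_of_le one_pos hΦy1
    -- weights
    set w : Rn n → Rn n → ℝ := fun z x' => (Φ x')⁻¹ * φ z x' with hw
    have hwrep : ∀ (x' : Rn n), x' ∈ U → Tf x' ⊆ T → F x' = ∑ z ∈ T, w z x' • f (p z) := by
      intro x' hx' hsub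
      have hx'e : x' ∉ E := hx'
      have key : ∑ z ∈ Tf x', φ z x' • f (p z) = ∑ z ∈ T, φ z x' • f (p z) :=
        Finset.sum_subset hsub fun z hzT hzn => by
          rw [hφnotS x' z (hTD hzT) fun h => hzn ((hTmem x' z).mpr h), zero_smul]
      rw [hF]
      simp only [if_neg hx'e]
      rw [key, Finset.smul_sum]
      exact Finset.sum_congr rfl fun z _ => by rw [hw, smul_smul]
    have hwsum : ∀ (x' : Rn n), x' ∈ U → Φ x' = ∑ z ∈ T, φ z x' → ∑ z ∈ T, w z x' = 1 := by
      intro x' hx' hrep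
      have hpos : 0 < Φ x' := lt_of_lt_of_le one_pos (hΦ1 x' hx')
      rw [hw]
      simp only
      rw [← Finset.mul_sum, ← hrep, inv_mul_cancel₀ hpos.ne']
    -- weight difference bound
    have hwdiff : ∀ z ∈ T, |w z x - w z y| ≤ 10 / d x * t + φ z y * (10 * (N:ℝ) / d x * t) := by
      intro z hz
      have hiddiff : |(Φ x)⁻¹ - (Φ y)⁻¹| ≤ |Φ x - Φ y| := by
        have hval : (Φ x)⁻¹ - (Φ y)⁻¹ = (Φ y - Φ x) / (Φ x * Φ y) := by
          field_simp
        rw [hval, abs_div, abs_sub_comm]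
        have h1 : (1:ℝ) ≤ |Φ x * Φ y| := by
          rw [abs_of_pos (mul_pos hΦxpos hΦypos)]
          nlinarith
        calc |Φ x - Φ y| / |Φ x * Φ y| ≤ |Φ x - Φ y| / 1 :=
              div_le_div_of_nonneg_left (abs_nonneg _) one_pos h1
          _ = |Φ x - Φ y| := div_one _
      have hval2 : w z x - w z y = (Φ x)⁻¹ * (φ z x - φ z y) + ((Φ x)⁻¹ - (Φ y)⁻¹) * φ z y := by
        rw [hw]; ring
      have hinv1 : (Φ x)⁻¹ ≤ 1 := by
        rw [inv_le_one_iff₀]; right; exact hΦx1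
      calc |w z x - w z y|
          ≤ |(Φ x)⁻¹ * (φ z x - φ z y)| + |((Φ x)⁻¹ - (Φ y)⁻¹) * φ z y| := by
            rw [hval2]; exact abs_add_le _ _
        _ ≤ |φ z x - φ z y| + φ z y * |Φ x - Φ y| := by
            rw [abs_mul, abs_mul]
            have h2 : |(Φ x)⁻¹| ≤ 1 := by
              rw [abs_of_pos (inv_pos.mpr hΦxpos)]; exact hinv1
            have h3 : |φ z y| = φ z y := abs_of_nonneg (hφ0 z y)
            nlinarith [abs_nonneg (φ z x - φ z y), abs_nonneg ((Φ x)⁻¹ - (Φ y)⁻¹),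
              hiddiff, hφ0 z y, abs_nonneg (Φ x - Φ y)]
        _ ≤ 10 / d x * t + φ z y * (10 * (N:ℝ) / d x * t) := by
            have := hφl z hz
            have h4 : φ z y * |Φ x - Φ y| ≤ φ z y * (10 * (N:ℝ) / d x * t) :=
              mul_le_mul_of_nonneg_left hΦdiff (hφ0 z y)
            linarith
    -- total weight variation
    have hwtot : ∑ z ∈ T, |w z x - w z y| ≤ CN / d x * t := by
      have hΦyN : Φ y ≤ (N:ℝ) := by
        rw [hΦyT]
        calc ∑ z ∈ T, φ z y ≤ ∑ _z ∈ T, (1:ℝ) := Finset.sum_le_sum fun z _ => hφ1 z y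
          _ = (T.card : ℝ) := by rw [Finset.sum_const, nsmul_eq_mul, mul_one]
          _ ≤ (N:ℝ) := hcard
      calc ∑ z ∈ T, |w z x - w z y|
          ≤ ∑ z ∈ T, (10 / d x * t + φ z y * (10 * (N:ℝ) / d x * t)) :=
            Finset.sum_le_sum hwdiff
        _ = (T.card : ℝ) * (10 / d x * t) + (∑ z ∈ T, φ z y) * (10 * (N:ℝ) / d x * t) := by
            rw [Finset.sum_add_distrib, Finset.sum_const, nsmul_eq_mul, ← Finset.sum_mul]
        _ ≤ (N:ℝ) * (10 / d x * t) + (N:ℝ) * (10 * (N:ℝ) / d x * t) := by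
            have h5 : 0 ≤ 10 / d x * t := by positivity
            have h6 : 0 ≤ 10 * (N:ℝ) / d x * t := by positivity
            have h7 : (∑ z ∈ T, φ z y) = Φ y := hΦyT.symm
            rw [h7]
            have h8 : 0 ≤ Φ y := hΦypos.le
            nlinarith
        _ = CN / d x * t := by rw [hCN]; ring
    -- per-z function bound
    set q : Rn n := p x with hq
    have hqE : q ∈ E := hpE x
    have hxq2 : dist x q ≤ 2 * d x := (hpd x hx).le
    have hBz : ∀ z ∈ T, ‖f (p z) - f q‖ ≤ 7 * Cω * β * ω (d x) := by
      intro z hz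
      have hdz := hTdz z hz
      have hzU : z ∈ U := hDU (hTD hz)
      have hpzq : dist (p z) q ≤ 7 * d x := by
        have h1 := (hpd z hzU).le
        have h2 := (hTz z hz).2.1
        have h3 := (hTz z hz).2.2
        calc dist (p z) q ≤ dist (p z) z + dist z x + dist x q := dist_triangle4 _ _ _ _
          _ ≤ 2 * d z + d x + 2 * d x := by
              rw [dist_comm (p z) z]; linarith
          _ ≤ 7 * d x := by linarith
      rcases eq_or_ne (p z) q with he | hne
      · rw [he, sub_self, norm_zero]; positivity
      · have h0 : 0 < dist (p z) q := dist_pos.mpr hne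
        calc ‖f (p z) - f q‖ ≤ β * ω (dist (p z) q) := hyp _ (hpE z) _ hqE hne hpzq
          _ ≤ 7 * Cω * β * ω (d x) := by
              have := hω.mono_dilate (by norm_num : (1:ℝ) ≤ 7) hdx h0 hpzq
              nlinarith
    -- representation of the difference
    have hrepx : F x = ∑ z ∈ T, w z x • f (p z) := hwrep x hx Finset.subset_union_left
    have hrepy : F y = ∑ z ∈ T, w z y • f (p z) := hwrep y hy Finset.subset_union_right
    have hsx : ∑ z ∈ T, w z x = 1 := hwsum x hx hΦxT
    have hsy : ∑ z ∈ T, w z y = 1 := hwsum y hy hΦyT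
    have hdiff : F x - F y = ∑ z ∈ T, (w z x - w z y) • (f (p z) - f q) := by
      have h1 : ∑ z ∈ T, (w z x - w z y) • (f (p z) - f q)
          = ∑ z ∈ T, (w z x - w z y) • f (p z) - (∑ z ∈ T, (w z x - w z y)) • f q := by
        rw [Finset.sum_smul, ← Finset.sum_sub_distrib]
        exact Finset.sum_congr rfl fun z _ => by rw [smul_sub]
      have h2 : ∑ z ∈ T, (w z x - w z y) = 0 := by rw [Finset.sum_sub_distrib, hsx, hsy, sub_self]
      rw [h1, h2, zero_smul, sub_zero, hrepx, hrepy, ← Finset.sum_sub_distrib]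
      exact Finset.sum_congr rfl fun z _ => by rw [sub_smul]
    rw [hdiff]
    calc ‖∑ z ∈ T, (w z x - w z y) • (f (p z) - f q)‖
        ≤ ∑ z ∈ T, ‖(w z x - w z y) • (f (p z) - f q)‖ := norm_sum_le _ _
      _ = ∑ z ∈ T, |w z x - w z y| * ‖f (p z) - f q‖ := by
          refine Finset.sum_congr rfl fun z _ => ?_
          rw [norm_smul, Real.norm_eq_abs]
      _ ≤ ∑ z ∈ T, |w z x - w z y| * (7 * Cω * β * ω (d x)) :=
          Finset.sum_le_sum fun z hz => mul_le_mul_of_nonneg_left (hBz z hz) (abs_nonneg _)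
      _ = (∑ z ∈ T, |w z x - w z y|) * (7 * Cω * β * ω (d x)) := by rw [Finset.sum_mul]
      _ ≤ (CN / d x * t) * (7 * Cω * β * ω (d x)) := by
          have h9 : 0 ≤ 7 * Cω * β * ω (d x) := by positivity
          exact mul_le_mul_of_nonneg_right hwtot h9
      _ = 7 * CN * Cω * β * (t / d x * ω (d x)) := by ring
  -- far-field estimate (both in U, comparable to distance)
  have hc1 : ∀ x y : Rn n, x ∈ U → y ∈ U → x ≠ y → d x ≤ 100 * dist x y →
      ∀ β : ℝ, 0 ≤ β →
      (∀ a ∈ E, ∀ b ∈ E, a ≠ b → dist a b ≤ 1005 * dist x y → ‖f a - f b‖ ≤ β * ω (dist a b)) →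
      ‖F x - F y‖ ≤ 2010 * Cω^2 * β * ω (dist x y) := by
    intro x y hx hy hxy hdx100 β hβ hyp
    set t := dist x y with htdef
    have ht0 : 0 < t := dist_pos.mpr hxy
    have hωt := hω.1 t ht0
    have hdx := hdpos x hx
    have hdy := hdpos y hy
    set q : Rn n := p x with hq
    have hqE : q ∈ E := hpE x
    have hxq : dist x q ≤ 200 * t := by
      have := (hpd x hx).le
      linarith
    have hyq : dist y q ≤ 201 * t := by
      calc dist y q ≤ dist y x + dist x q := dist_triangle _ _ _
        _ ≤ t + 200 * t := by rw [dist_comm y x]; linarith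
        _ = 201 * t := by ring
    have hxq0 : 0 < dist x q := lt_of_lt_of_le hdx (hdle x q hqE)
    have hyq0 : 0 < dist y q := lt_of_lt_of_le hdy (hdle y q hqE)
    have h1 : ‖F x - f q‖ ≤ 5 * Cω * β * ω (dist x q) := by
      refine hmix x hx q hqE β hβ fun a ha b hb hne hd => hyp a ha b hb hne ?_
      linarith
    have h2 : ‖F y - f q‖ ≤ 5 * Cω * β * ω (dist y q) := by
      refine hmix y hy q hqE β hβ fun a ha b hb hne hd => hyp a ha b hb hne ?_
      have : dist y q ≤ 201 * t := hyq
      linarith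
    have h3 : ω (dist x q) ≤ 201 * Cω * ω t :=
      hω.mono_dilate (by norm_num : (1:ℝ) ≤ 201) ht0 hxq0 (by linarith)
    have h4 : ω (dist y q) ≤ 201 * Cω * ω t :=
      hω.mono_dilate (by norm_num : (1:ℝ) ≤ 201) ht0 hyq0 (by linarith)
    calc ‖F x - F y‖ ≤ ‖F x - f q‖ + ‖f q - F y‖ := norm_sub_le_norm_sub_add_norm_sub _ _ _
      _ = ‖F x - f q‖ + ‖F y - f q‖ := by rw [norm_sub_rev (f q)]
      _ ≤ 5 * Cω * β * (201 * Cω * ω t) + 5 * Cω * β * (201 * Cω * ω t) := by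
          have h5 : 0 ≤ 5 * Cω * β := by positivity
          nlinarith [h1, h2, h3, h4, hω.1 _ hxq0, hω.1 _ hyq0]
      _ = 2010 * Cω^2 * β * ω t := by ring
  -- master estimate
  have hmaster : ∀ ε₁ : ℝ, 0 ≤ ε₁ → ∀ δ₁ : ℝ, 0 < δ₁ →
      (∀ a ∈ E, ∀ b ∈ E, a ≠ b → dist a b ≤ δ₁ → ‖f a - f b‖ ≤ ε₁ * ω (dist a b)) →
      ∀ x y : Rn n, x ≠ y → 5025 * dist x y ≤ δ₁ →
      ‖F x - F y‖ ≤ (2010 + 7 * CN) * Cω^2 * ε₁ * ω (dist x y)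
        + (7 * CN * Cω^2 * M * ω (δ₁/7) / (δ₁/7)) * dist x y := by
    intro ε₁ hε₁ δ₁ hδ₁ hyp x y hxy hscale
    set t := dist x y with htdef
    have ht0 : 0 < t := dist_pos.mpr hxy
    have hωt := hω.1 t ht0
    set Δ : ℝ := δ₁/7 with hΔdef
    have hΔ0 : 0 < Δ := by rw [hΔdef]; linarith
    have hωΔ := hω.1 Δ hΔ0
    set Lc : ℝ := 7 * CN * Cω^2 * M * ω Δ / Δ with hLc
    have hLc0 : 0 ≤ Lc := by rw [hLc]; positivity
    have hA1 : 1 ≤ (2010 + 7 * CN) * Cω^2 := by nlinarith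
    have htδ : t ≤ δ₁ := by nlinarith
    have hεω : 0 ≤ ε₁ * ω t := mul_nonneg hε₁ hωt.le
    have hLct : 0 ≤ Lc * t := mul_nonneg hLc0 ht0.le
    have hC2εω : 0 ≤ Cω^2 * (ε₁ * ω t) := by positivity
    have hKεω : 0 ≤ CN * (Cω^2 * (ε₁ * ω t)) := by positivity
    have hCωεω : 0 ≤ (Cω^2 - Cω) * (ε₁ * ω t) := mul_nonneg (by nlinarith) hεω
    -- symmetric inner core for both-in-U case with d y ≤ d x
    have hcore : ∀ x' y' : Rn n, x' ∈ U → y' ∈ U → x' ≠ y' → d y' ≤ d x' → dist x' y' = t →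
        ‖F x' - F y'‖ ≤ (2010 + 7 * CN) * Cω^2 * ε₁ * ω t + Lc * t := by
      intro a b ha hbU hab hba hdt
      have hda := hdpos a ha
      have hdb := hdpos b hbU
      rcases le_or_gt (d a) (100 * t) with hle | hgt
      · -- comparable scales
        have := hc1 a b ha hbU hab (by rw [hdt]; exact hle) ε₁ hε₁
          (fun u hu v hv huv hd => hyp u hu v hv huv (by rw [hdt] at hd; nlinarith))
        rw [hdt] at this
        calc ‖F a - F b‖ ≤ 2010 * Cω^2 * ε₁ * ω t := this
          _ ≤ (2010 + 7 * CN) * Cω^2 * ε₁ * ω t + Lc * t := by nlinarith [hεω, hLct, hKεω]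
      · -- deep case
        have h100 : 100 * dist a b < d a := by rw [hdt]; exact hgt
        have htled : t ≤ d a := by nlinarith
        rcases le_or_gt (d a) Δ with hsmall | hbig
        · have hres := hc2 a b ha hbU hab hba h100 ε₁ hε₁
            (fun u hu v hv huv hd => hyp u hu v hv huv (by nlinarith))
          rw [hdt] at hres
          have hkey : t / d a * ω (d a) ≤ Cω * ω t := by
            rw [div_mul_eq_mul_div, div_le_iff₀ hda]
            nlinarith [hω.scale ht0 htled]
          calc ‖F a - F b‖ ≤ 7 * CN * Cω * ε₁ * (t / d a * ω (d a)) := hres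
            _ ≤ 7 * CN * Cω * ε₁ * (Cω * ω t) := by
                have h5 : 0 ≤ 7 * CN * Cω * ε₁ := by positivity
                exact mul_le_mul_of_nonneg_left hkey h5
            _ ≤ (2010 + 7 * CN) * Cω^2 * ε₁ * ω t + Lc * t := by nlinarith [hεω, hLct, hC2εω, hKεω]
        · have hres := hc2 a b ha hbU hab hba h100 M hM0
            (fun u hu v hv huv hd => hb u hu v hv huv)
          rw [hdt] at hres
          have hkey2 : t / d a * ω (d a) ≤ (Cω * ω Δ / Δ) * t := by
            have hrw : (Cω * ω Δ / Δ) * t = (Cω * ω Δ * t) / Δ := by ring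
            rw [div_mul_eq_mul_div, hrw, div_le_div_iff₀ hda hΔ0]
            nlinarith [hω.scale hΔ0 hbig.le, ht0.le]
          calc ‖F a - F b‖ ≤ 7 * CN * Cω * M * (t / d a * ω (d a)) := hres
            _ ≤ 7 * CN * Cω * M * ((Cω * ω Δ / Δ) * t) := by
                have h5 : 0 ≤ 7 * CN * Cω * M := by positivity
                exact mul_le_mul_of_nonneg_left hkey2 h5
            _ = Lc * t := by rw [hLc]; ring
            _ ≤ (2010 + 7 * CN) * Cω^2 * ε₁ * ω t + Lc * t := by nlinarith [hεω, hC2εω, hKεω]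
    by_cases hxE : x ∈ E
    · by_cases hyE : y ∈ E
      · rw [hFE x hxE, hFE y hyE]
        have := hyp x hxE y hyE hxy htδ
        calc ‖f x - f y‖ ≤ ε₁ * ω t := this
          _ ≤ (2010 + 7 * CN) * Cω^2 * ε₁ * ω t + Lc * t := by nlinarith [hεω, hLct, hA1]
      · have hyU : y ∈ U := hyE
        have h1 : ‖F x - F y‖ = ‖F y - f x‖ := by rw [norm_sub_rev, hFE x hxE]
        have h2 : ‖F y - f x‖ ≤ 5 * Cω * ε₁ * ω (dist y x) := by
          refine hmix y hyU x hxE ε₁ hε₁ fun a ha b hb hne hd => hyp a ha b hb hne ?_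
          rw [dist_comm y x] at hd
          nlinarith
        rw [dist_comm y x] at h2
        rw [h1]
        calc ‖F y - f x‖ ≤ 5 * Cω * ε₁ * ω t := h2
          _ ≤ (2010 + 7 * CN) * Cω^2 * ε₁ * ω t + Lc * t := by
            nlinarith [hεω, hLct, hC2εω, hKεω, hCωεω]
    · have hxU : x ∈ U := hxE
      by_cases hyE : y ∈ E
      · have h2 : ‖F x - f y‖ ≤ 5 * Cω * ε₁ * ω (dist x y) := by
          refine hmix x hxU y hyE ε₁ hε₁ fun a ha b hb hne hd => hyp a ha b hb hne ?_
          nlinarith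
        rw [hFE y hyE]
        calc ‖F x - f y‖ ≤ 5 * Cω * ε₁ * ω t := h2
          _ ≤ (2010 + 7 * CN) * Cω^2 * ε₁ * ω t + Lc * t := by
            nlinarith [hεω, hLct, hC2εω, hKεω, hCωεω]
      · have hyU : y ∈ U := hyE
        rcases le_total (d y) (d x) with h | h
        · exact hcore x y hxU hyU hxy h rfl
        · rw [norm_sub_rev]
          exact hcore y x hyU hxU (Ne.symm hxy) h (dist_comm y x)
  refine ⟨F, hFE, ?_, ?_⟩
  · -- global Hölder bound
    refine ⟨(2010 + 7 * CN) * Cω^2 * M + 7 * CN * Cω^3 * M, ?_⟩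
    intro x y hxy
    set t := dist x y with htdef
    have ht0 : 0 < t := dist_pos.mpr hxy
    have hωt := hω.1 t ht0
    have h5025 : (0:ℝ) < 5025 * t := by linarith
    have hm := hmaster M hM0 (5025 * t) h5025
      (fun a ha b hbE hne _ => hb a ha b hbE hne) x y hxy (le_refl _)
    have hΔeq : (5025 * t)/7 = (5025/7) * t := by ring
    have hΔ0 : 0 < (5025 * t)/7 := by linarith
    have hωΔ0 := hω.1 _ hΔ0
    have hωΔle : ω ((5025 * t)/7) ≤ (5025/7) * Cω * ω t := by
      rw [hΔeq]
      exact hω.dilate (by norm_num) ht0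
    have hLt : (7 * CN * Cω^2 * M * ω ((5025 * t)/7) / ((5025 * t)/7)) * t
        = 7 * CN * Cω^2 * M * ω ((5025 * t)/7) * (7/5025) := by
      field_simp
    have hLtle : (7 * CN * Cω^2 * M * ω ((5025 * t)/7) / ((5025 * t)/7)) * t
        ≤ 7 * CN * Cω^3 * M * ω t := by
      rw [hLt]
      have h1 : 0 ≤ 7 * CN * Cω^2 * M * (7/5025) := by positivity
      nlinarith [mul_le_mul_of_nonneg_left hωΔle h1]
    calc ‖F x - F y‖ ≤ (2010 + 7 * CN) * Cω^2 * M * ω t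
          + (7 * CN * Cω^2 * M * ω ((5025 * t)/7) / ((5025 * t)/7)) * t := hm
      _ ≤ (2010 + 7 * CN) * Cω^2 * M * ω t + 7 * CN * Cω^3 * M * ω t := by linarith
      _ = ((2010 + 7 * CN) * Cω^2 * M + 7 * CN * Cω^3 * M) * ω t := by ring
  · -- uniform smallness
    intro ε hε
    have hA₀1 : 1 ≤ (2010 + 7 * CN) * Cω^2 := by nlinarith
    have hA₀0 : 0 < (2010 + 7 * CN) * Cω^2 := lt_of_lt_of_le one_pos hA₀1
    have hε₁0 : 0 < ε / (2 * ((2010 + 7 * CN) * Cω^2)) := by positivity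
    obtain ⟨δ₁, hδ₁, hyp⟩ := hs _ hε₁0
    have hΔ0 : 0 < δ₁/7 := by linarith
    have hωΔ := hω.1 _ hΔ0
    have hLc0 : 0 ≤ 7 * CN * Cω^2 * M * ω (δ₁/7) / (δ₁/7) := by positivity
    -- linear smallness from hreg
    have hreg' : ∃ δ₂ > 0, ∀ u : ℝ, 0 < u → u ≤ δ₂ →
        (7 * CN * Cω^2 * M * ω (δ₁/7) / (δ₁/7) + 1) * u ≤ ε/2 * ω u := by
      set Lc : ℝ := 7 * CN * Cω^2 * M * ω (δ₁/7) / (δ₁/7) with hLcdef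
      have hLc1 : 0 < Lc + 1 := by linarith
      rw [Metric.tendsto_nhdsWithin_nhds] at hreg
      obtain ⟨δ₂, hδ₂, hh⟩ := hreg ((ε/2)/(Lc+1)) (by positivity)
      refine ⟨δ₂/2, by linarith, fun u hu hule => ?_⟩
      have hωu := hω.1 u hu
      have h1 := hh (show u ∈ Ioi 0 from hu)
        (by simp only [Real.dist_eq, sub_zero, abs_of_pos hu]; linarith)
      rw [Real.dist_eq, sub_zero] at h1
      have h2 : u / ω u < (ε/2)/(Lc+1) := lt_of_abs_lt h1
      rw [div_lt_iff₀ hωu] at h2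
      have h3 : (Lc+1) * ((ε/2)/(Lc+1)) = ε/2 := by field_simp
      nlinarith [mul_lt_mul_of_pos_left h2 hLc1]
    obtain ⟨δ₂, hδ₂, hlin⟩ := hreg'
    refine ⟨min (δ₁/5025) δ₂, lt_min (by linarith) hδ₂, fun x y hxy htle => ?_⟩
    set t := dist x y with htdef
    have ht0 : 0 < t := dist_pos.mpr hxy
    have hωt := hω.1 t ht0
    have ht1 : 5025 * t ≤ δ₁ := by
      have := le_trans htle (min_le_left _ _)
      linarith
    have ht2 : t ≤ δ₂ := le_trans htle (min_le_right _ _)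
    have hm := hmaster _ hε₁0.le δ₁ hδ₁ hyp x y hxy ht1
    have hAε : (2010 + 7 * CN) * Cω^2 * (ε / (2 * ((2010 + 7 * CN) * Cω^2))) = ε/2 := by
      field_simp
    have hLcT : (7 * CN * Cω^2 * M * ω (δ₁/7) / (δ₁/7)) * t ≤ ε/2 * ω t := by
      have h4 := hlin t ht0 ht2
      nlinarith
    calc ‖F x - F y‖ ≤ (2010 + 7 * CN) * Cω^2 * (ε / (2 * ((2010 + 7 * CN) * Cω^2))) * ω t
          + (7 * CN * Cω^2 * M * ω (δ₁/7) / (δ₁/7)) * t := hm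
      _ ≤ ε/2 * ω t + ε/2 * ω t := by
          rw [hAε]
          linarith
      _ = ε * ω t := by ring


end WhitneyAux

/-- for `t/ω(t) → 0` as `t → 0⁺`, `E ⊆ ℝⁿ` arbitrary nonempty and `V` Banach,
`f ∈ C^{0,ω}(E,V)` admits an extension `F ∈ VC_small^{0,ω}(ℝⁿ,V)` iff
`f ∈ VC_small^{0,ω}(E,V)`. -/
theorem holder_extension_vanish_small {n : ℕ} {V : Type*} [NormedAddCommGroup V]
    [NormedSpace ℝ V] [CompleteSpace V] (ω : ℝ → ℝ) (Cω : ℝ) (hCω : 0 < Cω)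
    (hω : IsModulus ω Cω)
    (hreg : Filter.Tendsto (fun t => t / ω t) (nhdsWithin 0 (Set.Ioi 0)) (nhds 0))
    (E : Set (Rn n)) (hE : E.Nonempty) (f : Rn n → V) (hf : MemHolderOn ω f E) :
    (∃ F : Rn n → V, MemHolderOn ω F Set.univ ∧ VanishSmallOn ω F Set.univ ∧
        ∀ x ∈ E, F x = f x) ↔
      VanishSmallOn ω f E := by
  constructor
  · rintro ⟨F, _, hFsmall, hFE⟩
    intro ε hε
    obtain ⟨δ, hδ, hsm⟩ := hFsmall ε hε
    refine ⟨δ, hδ, fun x hx y hy hxy hd => ?_⟩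
    rw [← hFE x hx, ← hFE y hy]
    exact hsm x (Set.mem_univ x) y (Set.mem_univ y) hxy hd
  · intro hsmall
    obtain ⟨M₀, hM₀⟩ := hf
    set M : ℝ := max M₀ 0 with hMdef
    have hM0 : 0 ≤ M := le_max_right _ _
    have hb : ∀ x ∈ E, ∀ y ∈ E, x ≠ y → ‖f x - f y‖ ≤ M * ω (dist x y) := by
      intro x hx y hy hxy
      have hmem : ‖f x - f y‖ / ω ‖x - y‖ ∈ ratioSet ω f E := ⟨x, hx, y, hy, hxy, rfl⟩
      have h1 := hM₀ hmem
      have hnorm : 0 < ‖x - y‖ := norm_sub_pos_iff.mpr hxy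
      have hω0 := hω.1 _ hnorm
      rw [div_le_iff₀ hω0] at h1
      rw [dist_eq_norm]
      calc ‖f x - f y‖ ≤ M₀ * ω ‖x - y‖ := h1
        _ ≤ M * ω ‖x - y‖ := mul_le_mul_of_nonneg_right (le_max_left _ _) hω0.le
    have hsm : ∀ ε : ℝ, 0 < ε → ∃ δ > 0, ∀ x ∈ E, ∀ y ∈ E, x ≠ y → dist x y ≤ δ →
        ‖f x - f y‖ ≤ ε * ω (dist x y) := by
      intro ε hε
      obtain ⟨δ, hδ, h⟩ := hsmall ε hε
      refine ⟨δ, hδ, fun x hx y hy hxy hd => ?_⟩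
      rw [dist_eq_norm] at hd ⊢
      exact h x hx y hy hxy hd
    obtain ⟨g, hgE, hgprop⟩ := extend_to_closure hCω hω E hE f M hM0 hb
    have hb' : ∀ x ∈ closure E, ∀ y ∈ closure E, x ≠ y →
        ‖g x - g y‖ ≤ (2 * Cω * M) * ω (dist x y) := by
      intro x hx y hy hxy
      have hd0 : 0 < dist x y := dist_pos.mpr hxy
      exact hgprop M (2 * dist x y) hM0 (by linarith)
        (fun a ha b hbE hne _ => hb a ha b hbE hne) x hx y hy hxy (by linarith)
    have hs' : ∀ ε : ℝ, 0 < ε → ∃ δ > 0, ∀ x ∈ closure E, ∀ y ∈ closure E, x ≠ y →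
        dist x y ≤ δ → ‖g x - g y‖ ≤ ε * ω (dist x y) := by
      intro ε hε
      have hε' : 0 < ε / (2 * Cω) := by positivity
      obtain ⟨δ₁, hδ₁, h⟩ := hsm _ hε'
      refine ⟨δ₁/2, by linarith, fun x hx y hy hxy hd => ?_⟩
      have h2 := hgprop (ε/(2*Cω)) δ₁ hε'.le hδ₁ h x hx y hy hxy hd
      have heq : 2 * Cω * (ε/(2*Cω)) = ε := by field_simp
      calc ‖g x - g y‖ ≤ 2 * Cω * (ε/(2*Cω)) * ω (dist x y) := h2
        _ = ε * ω (dist x y) := by rw [heq]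
    obtain ⟨F, hFE', hHold, hSm⟩ := whitney_closed hCω hω hreg (closure E) isClosed_closure
      hE.closure g (2 * Cω * M) (by positivity) hb' hs'
    refine ⟨F, ?_, ?_, fun x hx => ?_⟩
    · obtain ⟨A, hA⟩ := hHold
      refine ⟨max A 0, ?_⟩
      rintro r ⟨x, -, y, -, hxy, rfl⟩
      have hnorm : 0 < ‖x - y‖ := norm_sub_pos_iff.mpr hxy
      have hω0 := hω.1 _ hnorm
      have h2 := hA x y hxy
      rw [dist_eq_norm] at h2
      rw [div_le_iff₀ hω0]
      calc ‖F x - F y‖ ≤ A * ω ‖x - y‖ := h2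
        _ ≤ max A 0 * ω ‖x - y‖ := mul_le_mul_of_nonneg_right (le_max_left _ _) hω0.le
    · intro ε hε
      obtain ⟨δ, hδ, h⟩ := hSm ε hε
      refine ⟨δ, hδ, fun x _ y _ hxy hd => ?_⟩
      have h3 := h x y hxy (by rwa [dist_eq_norm])
      rwa [dist_eq_norm] at h3
    · exact (hFE' x (subset_closure hx)).trans (hgE x hx)
end
end

section
/- Let V be a normed space, let m ∈ ℕ∪{0}, and let F : ℝⁿ → V be m-times continuously differentiable. Then for all distinct x, y ∈ ℝⁿ and every k ∈ {0,…,m}, ‖D^k F(x) − Σ_{j=0}^{m−k} (1/j!) D^{k+j} F(y)(x−y)^j‖ ≤ (1/(m−k)!) · |x−y|^{m−k} · sup_{z∈[x,y]} ‖D^m F(z) − D^m F(y)‖, where the norm on the left is the operator norm of symmetric k-linear maps. -/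
open Filter Set Topology

noncomputable section

namespace TaylorAux

variable {n : ℕ} {V : Type*} [NormedAddCommGroup V] [NormedSpace ℝ V]

/-- `T ↦ T.curryLeft v` as a continuous linear map. -/
def curryLeftCLM (p : ℕ) (v : Rn n) :
    ContinuousMultilinearMap ℝ (fun _ : Fin (p + 1) => Rn n) V →L[ℝ]
      ContinuousMultilinearMap ℝ (fun _ : Fin p => Rn n) V :=
  (ContinuousLinearMap.apply ℝ _ v).comp
    (continuousMultilinearCurryLeftEquiv ℝ (fun _ : Fin (p + 1) => Rn n)
      V).toContinuousLinearEquiv.toContinuousLinearMap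

@[simp] theorem curryLeftCLM_apply (p : ℕ) (v : Rn n)
    (T : ContinuousMultilinearMap ℝ (fun _ : Fin (p + 1) => Rn n) V) :
    curryLeftCLM p v T = T.curryLeft v := rfl

theorem plugIn_zero (v : Rn n) {k : ℕ}
    (T : ContinuousMultilinearMap ℝ (fun _ : Fin (k + 0) => Rn n) V) :
    plugIn v 0 T = T := rfl

theorem plugIn_succ (v : Rn n) (j : ℕ) {k : ℕ}
    (T : ContinuousMultilinearMap ℝ (fun _ : Fin (k + (j + 1)) => Rn n) V) :
    plugIn v (j + 1) T = plugIn v j (T.curryLeft v) := rfl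

theorem plugIn_norm_le (v : Rn n) :
    ∀ (j : ℕ) {k : ℕ} (T : ContinuousMultilinearMap ℝ (fun _ : Fin (k + j) => Rn n) V),
      ‖plugIn v j T‖ ≤ ‖v‖ ^ j * ‖T‖
  | 0, k, T => by simp [plugIn_zero]
  | j + 1, k, T => by
    calc ‖plugIn v j (T.curryLeft v)‖ ≤ ‖v‖ ^ j * ‖T.curryLeft v‖ := plugIn_norm_le v j _
    _ ≤ ‖v‖ ^ j * (‖T‖ * ‖v‖) := by
        have h := T.curryLeft.le_opNorm v
        rw [T.curryLeft_norm] at h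
        exact mul_le_mul_of_nonneg_left h (by positivity)
    _ = ‖v‖ ^ (j + 1) * ‖T‖ := by ring

theorem plugIn_sub (v : Rn n) :
    ∀ (j : ℕ) {k : ℕ} (S T : ContinuousMultilinearMap ℝ (fun _ : Fin (k + j) => Rn n) V),
      plugIn v j (S - T) = plugIn v j S - plugIn v j T
  | 0, k, S, T => rfl
  | j + 1, k, S, T => by
    have hcl : (S - T).curryLeft v = S.curryLeft v - T.curryLeft v := by
      ext w
      simp only [ContinuousMultilinearMap.curryLeft_apply, ContinuousMultilinearMap.sub_apply]
    rw [plugIn_succ, plugIn_succ, plugIn_succ, hcl, plugIn_sub v j]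

theorem plugIn_hasDerivAt (v : Rn n) :
    ∀ (j : ℕ) {k : ℕ}
      {T : ℝ → ContinuousMultilinearMap ℝ (fun _ : Fin (k + j) => Rn n) V}
      {T' : ContinuousMultilinearMap ℝ (fun _ : Fin (k + j) => Rn n) V} {t : ℝ},
      HasDerivAt T T' t →
      HasDerivAt (fun s => plugIn v j (T s)) (plugIn v j T') t
  | 0, k, T, T', t, h => h
  | j + 1, k, T, T', t, h => by
    have h1 : HasDerivAt (fun s => (T s).curryLeft v) (T'.curryLeft v) t := by
      have := ((curryLeftCLM (k + j) v).hasFDerivAt (x := T t)).comp_hasDerivAt t h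
      simpa [Function.comp_def] using this
    exact plugIn_hasDerivAt v j h1

/-- scalar coefficient `(1-t)^j / j!`. -/
def cc (j : ℕ) (t : ℝ) : ℝ := (1 - t) ^ j / j.factorial

/-- its derivative. -/
def cc' (j : ℕ) (t : ℝ) : ℝ := (j : ℝ) * (1 - t) ^ (j - 1) * (-1) / j.factorial

theorem hasDerivAt_cc (j : ℕ) (t : ℝ) : HasDerivAt (cc j) (cc' j t) t :=
  (((hasDerivAt_id t).const_sub 1).pow j).div_const _

theorem cc'_zero (t : ℝ) : cc' 0 t = 0 := by simp [cc']

theorem cc'_succ (j : ℕ) (t : ℝ) : cc' (j + 1) t = -(cc j t) := by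
  have h2 : (j.factorial : ℝ) ≠ 0 := by exact_mod_cast (Nat.factorial_pos _).ne'
  simp only [cc, cc', Nat.factorial_succ, Nat.add_sub_cancel]
  push_cast
  field_simp

/-- The `j`-th term ingredient `plugIn v j (D^{k+j}F (y + t v))`. -/
def PP (F : Rn n → V) (k : ℕ) (v y : Rn n) (j : ℕ) (t : ℝ) :
    ContinuousMultilinearMap ℝ (fun _ : Fin k => Rn n) V :=
  plugIn v j (iteratedFDeriv ℝ (k + j) F (y + t • v))

theorem hasDerivAt_PP {F : Rn n → V} {k d : ℕ} (hF : ContDiff ℝ (k + d : ℕ) F)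
    (v y : Rn n) {j : ℕ} (hj : j < d) (t : ℝ) :
    HasDerivAt (PP F k v y j) (PP F k v y (j + 1) t) t := by
  have hγ' : HasDerivAt (fun s : ℝ => y + s • v) v t := by
    simpa using ((hasDerivAt_id t).smul_const v).const_add y
  have hdiff : DifferentiableAt ℝ (iteratedFDeriv ℝ (k + j) F) (y + t • v) :=
    (hF.differentiable_iteratedFDeriv
      (by exact_mod_cast Nat.add_lt_add_left hj k)) _
  have h1 : HasDerivAt (fun s : ℝ => iteratedFDeriv ℝ (k + j) F (y + s • v))
      ((iteratedFDeriv ℝ (k + j + 1) F (y + t • v)).curryLeft v) t := by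
    have h2 := hdiff.hasFDerivAt.comp_hasDerivAt t hγ'
    have h3 : fderiv ℝ (iteratedFDeriv ℝ (k + j) F) (y + t • v) v =
        (iteratedFDeriv ℝ (k + j + 1) F (y + t • v)).curryLeft v := by
      rw [fderiv_iteratedFDeriv]
      rfl
    rw [h3] at h2
    simpa [Function.comp_def] using h2
  exact plugIn_hasDerivAt v j h1

/-- The auxiliary function `ψ`. -/
def psi (F : Rn n → V) (k e : ℕ) (v y : Rn n) (t : ℝ) :
    ContinuousMultilinearMap ℝ (fun _ : Fin k => Rn n) V :=
  (∑ j ∈ Finset.range (e + 1), cc j t • PP F k v y j t) +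
    cc (e + 1) t • plugIn v (e + 1) (iteratedFDeriv ℝ (k + (e + 1)) F y)

theorem hasDerivAt_psi {F : Rn n → V} {k e : ℕ} (hF : ContDiff ℝ (k + (e + 1) : ℕ) F)
    (v y : Rn n) (t : ℝ) :
    HasDerivAt (psi F k e v y)
      (cc e t • plugIn v (e + 1)
        (iteratedFDeriv ℝ (k + (e + 1)) F (y + t • v) -
          iteratedFDeriv ℝ (k + (e + 1)) F y)) t := by
  have hsum : HasDerivAt (fun s => ∑ j ∈ Finset.range (e + 1), cc j s • PP F k v y j s)
      (∑ j ∈ Finset.range (e + 1),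
        (cc' j t • PP F k v y j t - cc' (j + 1) t • PP F k v y (j + 1) t)) t := by
    apply HasDerivAt.fun_sum
    intro j hj
    have h := (hasDerivAt_cc j t).smul (hasDerivAt_PP hF v y (Finset.mem_range.mp hj) t)
    refine h.congr_deriv ?_
    rw [cc'_succ j t, neg_smul, sub_neg_eq_add, add_comm]
  rw [Finset.sum_range_sub' (f := fun i => cc' i t • PP F k v y i t)] at hsum
  have hlast : HasDerivAt
      (fun s => cc (e + 1) s • plugIn v (e + 1) (iteratedFDeriv ℝ (k + (e + 1)) F y))
      (cc' (e + 1) t • plugIn v (e + 1) (iteratedFDeriv ℝ (k + (e + 1)) F y)) t :=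
    (hasDerivAt_cc (e + 1) t).smul_const (plugIn v (e + 1) (iteratedFDeriv ℝ (k + (e + 1)) F y))
  have htot := hsum.add hlast
  refine htot.congr_deriv ?_
  simp only [cc'_zero, zero_smul, zero_sub, cc'_succ e t, plugIn_sub, smul_sub, neg_smul]
  have hPP : PP F k v y (e + 1) t = plugIn v (e + 1) (iteratedFDeriv ℝ (k + (e + 1)) F (y + t • v)) := rfl
  rw [hPP]
  abel

theorem psi_one (F : Rn n → V) (k e : ℕ) (v y : Rn n) :
    psi F k e v y 1 = iteratedFDeriv ℝ k F (y + v) := by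
  have h1 : ∀ j : ℕ, 1 ≤ j → cc j 1 = 0 := by
    intro j hj
    simp [cc, zero_pow (by omega : j ≠ 0)]
  have h2 : cc (e + 1) 1 = 0 := h1 _ (by omega)
  rw [psi, h2, zero_smul, add_zero,
    Finset.sum_eq_single 0 (fun b _ hb => by rw [h1 b (by omega), zero_smul])
      (fun h => absurd (Finset.mem_range.mpr (by omega)) h)]
  have : cc 0 1 = 1 := by simp [cc]
  rw [this, one_smul]
  show plugIn v 0 (iteratedFDeriv ℝ (k + 0) F (y + (1 : ℝ) • v)) = _
  rw [plugIn_zero, one_smul]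
  rfl

theorem psi_zero (F : Rn n → V) (k e : ℕ) (v y : Rn n) :
    psi F k e v y 0 = ∑ j ∈ Finset.range (e + 2),
      (j.factorial : ℝ)⁻¹ • plugIn v j (iteratedFDeriv ℝ (k + j) F y) := by
  rw [show e + 2 = (e + 1) + 1 by ring, Finset.sum_range_succ, psi]
  congr 1
  · apply Finset.sum_congr rfl
    intro j _
    have : cc j 0 = (j.factorial : ℝ)⁻¹ := by simp [cc, one_div]
    rw [this]
    congr 1
    show plugIn v j (iteratedFDeriv ℝ (k + j) F (y + (0 : ℝ) • v)) = _
    rw [zero_smul, add_zero]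
  · have : cc (e + 1) 0 = ((e + 1).factorial : ℝ)⁻¹ := by simp [cc, one_div]
    rw [this]

theorem key (F : Rn n → V) (k d : ℕ) (hF : ContDiff ℝ (k + d : ℕ) F) (x y : Rn n)
    (M : ℝ) (hM : ∀ z ∈ segment ℝ x y,
      ‖iteratedFDeriv ℝ (k + d) F z - iteratedFDeriv ℝ (k + d) F y‖ ≤ M) :
    ‖iteratedFDeriv ℝ k F x - ∑ j ∈ Finset.range (d + 1),
        (j.factorial : ℝ)⁻¹ • plugIn (x - y) j (iteratedFDeriv ℝ (k + j) F y)‖ ≤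
      (d.factorial : ℝ)⁻¹ * ‖x - y‖ ^ d * M := by
  cases d with
  | zero =>
    simpa [plugIn_zero] using hM x (left_mem_segment ℝ x y)
  | succ e =>
    set v := x - y with hv
    have hM0 : 0 ≤ M := le_trans (by simp) (hM y (right_mem_segment ℝ x y))
    have hγmem : ∀ t ∈ Icc (0 : ℝ) 1, y + t • v ∈ segment ℝ x y := by
      intro t ht
      rw [segment_symm, segment_eq_image']
      exact ⟨t, ht, rfl⟩
    have hψ' : ∀ t : ℝ, HasDerivAt (psi F k e v y)
        (cc e t • plugIn v (e + 1)
          (iteratedFDeriv ℝ (k + (e + 1)) F (y + t • v) -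
            iteratedFDeriv ℝ (k + (e + 1)) F y)) t :=
      fun t => hasDerivAt_psi hF v y t
    have hB : ∀ t : ℝ, HasDerivAt
        (fun t => (M * ‖v‖ ^ (e + 1) / (e + 1).factorial) * (1 - (1 - t) ^ (e + 1)))
        ((M * ‖v‖ ^ (e + 1) / e.factorial) * (1 - t) ^ e) t := by
      intro t
      have h1 : HasDerivAt (fun s : ℝ => 1 - (1 - s) ^ (e + 1))
          (-(((e + 1 : ℕ) : ℝ) * (1 - t) ^ (e + 1 - 1) * (-1))) t :=
        (((hasDerivAt_id t).const_sub 1).pow (e + 1)).const_sub 1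
      have h2 := h1.const_mul (M * ‖v‖ ^ (e + 1) / ((e + 1).factorial : ℝ))
      refine h2.congr_deriv ?_
      have he : (e.factorial : ℝ) ≠ 0 := by exact_mod_cast (Nat.factorial_pos _).ne'
      simp only [Nat.factorial_succ, Nat.add_sub_cancel]
      push_cast
      field_simp
    have bound : ∀ t ∈ Ico (0 : ℝ) 1,
        ‖cc e t • plugIn v (e + 1)
          (iteratedFDeriv ℝ (k + (e + 1)) F (y + t • v) -
            iteratedFDeriv ℝ (k + (e + 1)) F y)‖ ≤
          (M * ‖v‖ ^ (e + 1) / e.factorial) * (1 - t) ^ e := by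
      intro t ht
      have h1t : (0 : ℝ) ≤ 1 - t := by linarith [ht.2]
      have hcc0 : 0 ≤ cc e t := div_nonneg (pow_nonneg h1t e) (by positivity)
      have h3 : ‖plugIn v (e + 1) (iteratedFDeriv ℝ (k + (e + 1)) F (y + t • v) -
          iteratedFDeriv ℝ (k + (e + 1)) F y)‖ ≤ ‖v‖ ^ (e + 1) * M := by
        refine (plugIn_norm_le v (e + 1) _).trans ?_
        exact mul_le_mul_of_nonneg_left (hM _ (hγmem t ⟨ht.1, ht.2.le⟩)) (by positivity)
      have h5 := norm_smul (cc e t) (plugIn v (e + 1)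
        (iteratedFDeriv ℝ (k + (e + 1)) F (y + t • v) - iteratedFDeriv ℝ (k + (e + 1)) F y))
      rw [h5, Real.norm_eq_abs, abs_of_nonneg hcc0]
      calc cc e t * ‖plugIn v (e + 1) (iteratedFDeriv ℝ (k + (e + 1)) F (y + t • v) -
            iteratedFDeriv ℝ (k + (e + 1)) F y)‖
          ≤ cc e t * (‖v‖ ^ (e + 1) * M) := mul_le_mul_of_nonneg_left h3 hcc0
        _ = (M * ‖v‖ ^ (e + 1) / e.factorial) * (1 - t) ^ e := by
            simp only [cc]
            ring
    have hcont : ContinuousOn (fun t => psi F k e v y t - psi F k e v y 0) (Icc 0 1) :=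
      fun t _ => (((hψ' t).continuousAt).sub continuousAt_const).continuousWithinAt
    have ha : ‖psi F k e v y 0 - psi F k e v y 0‖ ≤
        (M * ‖v‖ ^ (e + 1) / (e + 1).factorial) * (1 - (1 - (0:ℝ)) ^ (e + 1)) := by
      simp
    have hmv := image_norm_le_of_norm_deriv_right_le_deriv_boundary hcont
      (fun t _ => ((hψ' t).sub_const _).hasDerivWithinAt) ha hB bound
      (right_mem_Icc.mpr zero_le_one)
    have hB1 : (M * ‖v‖ ^ (e + 1) / (e + 1).factorial) * (1 - (1 - (1:ℝ)) ^ (e + 1)) =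
        M * ‖v‖ ^ (e + 1) / (e + 1).factorial := by
      simp
    rw [hB1] at hmv
    have h1 : psi F k e v y 1 = iteratedFDeriv ℝ k F x := by
      rw [psi_one]
      congr 1
      rw [hv]
      abel
    have h0 := psi_zero F k e v y
    rw [h1, h0] at hmv
    calc ‖iteratedFDeriv ℝ k F x - ∑ j ∈ Finset.range (e + 1 + 1),
          (j.factorial : ℝ)⁻¹ • plugIn v j (iteratedFDeriv ℝ (k + j) F y)‖
        = ‖iteratedFDeriv ℝ k F x - ∑ j ∈ Finset.range (e + 2),
          (j.factorial : ℝ)⁻¹ • plugIn v j (iteratedFDeriv ℝ (k + j) F y)‖ := by norm_num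
      _ ≤ M * ‖v‖ ^ (e + 1) / (e + 1).factorial := hmv
      _ = ((e + 1).factorial : ℝ)⁻¹ * ‖v‖ ^ (e + 1) * M := by ring

end TaylorAux
/-- Taylor estimate for `C^m` maps: for distinct `x, y` and `k ≤ m`,
`‖D^k F(x) − Σ_{j≤m−k} (1/j!) D^{k+j}F(y)(x−y)^j‖
  ≤ (1/(m−k)!)·|x−y|^{m−k}·sup_{z∈[x,y]} ‖D^m F(z) − D^m F(y)‖`. -/
theorem taylor_remainder_bound {n m : ℕ} {V : Type*} [NormedAddCommGroup V] [NormedSpace ℝ V]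
    (F : Rn n → V) (hF : ContDiff ℝ m F) (x y : Rn n) (hxy : x ≠ y) (k : ℕ) (hk : k ≤ m) :
    ‖iteratedFDeriv ℝ k F x - ∑ j ∈ Finset.range (m - k + 1),
        (j.factorial : ℝ)⁻¹ • plugIn (x - y) j (iteratedFDeriv ℝ (k + j) F y)‖ ≤
      ((m - k).factorial : ℝ)⁻¹ * ‖x - y‖ ^ (m - k) *
        ⨆ z : (segment ℝ x y), ‖iteratedFDeriv ℝ m F ↑z - iteratedFDeriv ℝ m F y‖ := by
  obtain ⟨d, rfl⟩ : ∃ d, m = k + d := ⟨m - k, (Nat.add_sub_cancel' hk).symm⟩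
  simp only [Nat.add_sub_cancel_left]
  have hcont : Continuous fun z : Rn n =>
      ‖iteratedFDeriv ℝ (k + d) F z - iteratedFDeriv ℝ (k + d) F y‖ :=
    ((hF.continuous_iteratedFDeriv le_rfl).sub continuous_const).norm
  have hcomp : IsCompact (segment ℝ x y) := by
    rw [segment_eq_image']
    exact isCompact_Icc.image (by fun_prop)
  have hbdd : BddAbove (Set.range fun z : segment ℝ x y =>
      ‖iteratedFDeriv ℝ (k + d) F ↑z - iteratedFDeriv ℝ (k + d) F y‖) := by
    have h2 := (hcomp.image hcont).bddAbove
    rwa [Set.image_eq_range] at h2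
  exact TaylorAux.key F k d hF x y _ (fun z hz => le_ciSup hbdd ⟨z, hz⟩)
end
end
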